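/- Let Γ_j(n,2) denote the j-th cumulant of log|det X_n| for an n×n GUE matrix X_n, given for n = 2k+1 by Γ_j(n,2) = (d^j/ds^j) log M_{n,2}(s)|_{s=0} with M_{n,2}(s) = 2^{ns/2}·∏_{m=1}^{n} Γ(s/2 + 1/2 + ⌊m/2⌋)/Γ(1/2 + ⌊m/2⌋). Then there is a constant C, independent of n and j, such that |Γ_j(n,2)| ≤ C·j! for all integers j ≥ 3 and all n ≥ 1. -/

import Mathlib

/-- The moment generating function of the log-determinant of an `n × n` GUE matrix:
`M_{n,2}(s) = 2^{ns/2} · ∏_{m=1}^{n} Γ(s/2 + 1/2 + ⌊m/2⌋)/Γ(1/2 + ⌊m/2⌋)`. -/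
noncomputable def gueMgf (n : ℕ) (s : ℝ) : ℝ :=
  (2 : ℝ) ^ ((n : ℝ) * s / 2) *
    ∏ m ∈ Finset.Icc 1 n,
      Real.Gamma (s / 2 + 1/2 + (m / 2 : ℕ)) / Real.Gamma (1/2 + (m / 2 : ℕ))

/-- The `j`-th cumulant of the log-determinant of an `n × n` GUE matrix. -/
noncomputable def gueCumulant (j n : ℕ) : ℝ :=
  iteratedDeriv j (fun s => Real.log (gueMgf n s)) 0

/-!
For `s > -1`, `log M_{n,2}(s) = (n log 2 / 2) s + ∑_{m=1}^n (log Γ(s/2 + a_m) - log Γ(a_m))`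
with `a_m = 1/2 + ⌊m/2⌋`. Differentiating Gauss's series `ψ(x) = -γ - 1/x + ∑ (1/(i+1) - 1/(x+i+1))`
for the digamma function gives, for `j ≥ 2`, `Γ_j(n,2) = (-1)^j (j-1)! 2^{-j} ∑_m ζ(j, a_m)`, where
`ζ(j, x) = ∑_i (x+i)^{-j}` (`hurwitzSum j x`) is the Hurwitz zeta function. Since `2 a_m ≥ m`, for
`j ≥ 3` the `m`-th term is at most `ζ(3, 2 a_m) ≤ 2/m²`, so `|Γ_j(n,2)| ≤ 4 (j-1)! ≤ 4 j!`.
-/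

open Real Filter Topology Set
open scoped Nat

noncomputable def hurwitzSum (k : ℕ) (x : ℝ) : ℝ := ∑' i : ℕ, 1 / (x + i) ^ k

section HurwitzSum

variable {k : ℕ} {x : ℝ}

lemma summable_one_div_add_pow (hx : 0 ≤ x) (hk : 2 ≤ k) :
    Summable fun i : ℕ => 1 / (x + i) ^ k := by
  refine ((Real.summable_one_div_nat_add_rpow x k).2 (by exact_mod_cast hk)).congr fun i => ?_
  rw [abs_of_nonneg (by positivity), Real.rpow_natCast, add_comm]

lemma hurwitzSum_nonneg (k : ℕ) (hx : 0 ≤ x) : 0 ≤ hurwitzSum k x :=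
  tsum_nonneg fun _ => by positivity

lemma hasDerivAt_one_div_add_pow (k : ℕ) (c : ℝ) (hx : x + c ≠ 0) :
    HasDerivAt (fun y => 1 / (y + c) ^ k) (-k * (1 / (x + c) ^ (k + 1))) x := by
  have h : HasDerivAt (fun y => (y + c) ^ (-(k : ℤ))) (-k * (x + c) ^ (-((k + 1 : ℕ) : ℤ))) x :=
    ((hasDerivAt_zpow _ _ (Or.inl hx)).comp_add_const x c).congr_deriv (by push_cast; ring_nf)
  simpa only [zpow_neg, zpow_natCast, one_div] using h

lemma hasDerivAt_hurwitzSum (hk : 2 ≤ k) (hx : 0 < x) :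
    HasDerivAt (hurwitzSum k) (-k * hurwitzSum (k + 1) x) x := by
  have hpos (y : ℝ) (hy : y ∈ Ioi (x / 2)) (i : ℕ) : 0 < y + i := by
    have : 0 < y := (half_pos hx).trans hy
    positivity
  have hbound (i : ℕ) (y : ℝ) (hy : y ∈ Ioi (x / 2)) :
      ‖-(k : ℝ) * (1 / (y + i) ^ (k + 1))‖ ≤ k * (1 / (x / 2 + i) ^ (k + 1)) := by
    have := hpos y hy i
    have := half_pos hx
    rw [norm_mul, norm_neg, Real.norm_natCast, Real.norm_of_nonneg (by positivity)]
    gcongr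
    exact le_of_lt hy
  have h := hasDerivAt_tsum_of_isPreconnected
    ((summable_one_div_add_pow (half_pos hx).le (by omega : 2 ≤ k + 1)).mul_left (k : ℝ))
    isOpen_Ioi isPreconnected_Ioi
    (fun i y hy => hasDerivAt_one_div_add_pow k (i : ℝ) (hpos y hy i).ne') hbound
    (half_lt_self hx) (summable_one_div_add_pow hx.le hk) (half_lt_self hx)
  rwa [tsum_mul_left] at h

lemma one_div_pow_three_le_sub {y : ℝ} (hy : 1 ≤ y) :
    1 / y ^ 3 ≤ 2 / y ^ 2 - 2 / (y + 1) ^ 2 := by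
  have hy0 : 0 < y := by linarith
  rw [div_sub_div _ _ (by positivity) (by positivity),
    div_le_div_iff₀ (by positivity) (by positivity)]
  nlinarith [mul_nonneg (sq_nonneg y) (show 0 ≤ 3 * y ^ 2 - 1 by nlinarith)]

lemma hurwitzSum_three_le (hx : 1 ≤ x) : hurwitzSum 3 x ≤ 2 / x ^ 2 := by
  refine (summable_one_div_add_pow (by linarith) (by norm_num)).tsum_le_of_sum_range_le
    fun N => ?_
  calc ∑ i ∈ Finset.range N, 1 / (x + i) ^ 3
      ≤ ∑ i ∈ Finset.range N, (2 / (x + i) ^ 2 - 2 / (x + (i + 1 : ℕ)) ^ 2) := by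
        refine Finset.sum_le_sum fun i _ => ?_
        push_cast
        rw [← add_assoc]
        exact one_div_pow_three_le_sub (le_add_of_le_of_nonneg hx i.cast_nonneg)
    _ = 2 / x ^ 2 - 2 / (x + N) ^ 2 := by
        rw [Finset.sum_range_sub' (fun i : ℕ => 2 / (x + i) ^ 2)]; simp
    _ ≤ 2 / x ^ 2 := by
        have : 0 ≤ 2 / (x + N) ^ 2 := by positivity
        linarith

lemma hurwitzSum_div_two_pow_le (hk : 3 ≤ k) (hx : 1 / 2 ≤ x) :
    hurwitzSum k x / 2 ^ k ≤ hurwitzSum 3 (2 * x) := by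
  rw [hurwitzSum, hurwitzSum, ← tsum_div_const]
  refine Summable.tsum_le_tsum (fun i => ?_)
    ((summable_one_div_add_pow (by linarith) (by omega)).div_const _)
    (summable_one_div_add_pow (by linarith) (by norm_num))
  have hi : (0 : ℝ) ≤ i := i.cast_nonneg
  calc 1 / (x + i) ^ k / 2 ^ k = 1 / (2 * x + 2 * i) ^ k := by
        rw [div_div, ← mul_pow]; ring_nf
    _ ≤ 1 / (2 * x + 2 * i) ^ 3 :=
        one_div_pow_le_one_div_pow_of_le (by linarith) hk
    _ ≤ 1 / (2 * x + i) ^ 3 := by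
        gcongr
        linarith

end HurwitzSum

noncomputable def digammaSeries (x : ℝ) : ℝ :=
  -eulerMascheroniConstant - 1 / x + ∑' i : ℕ, (1 / ((i : ℝ) + 1) - 1 / (x + (i + 1)))

section Digamma

variable {x : ℝ}

lemma one_div_sub_one_div_add_mem_Icc (i : ℕ) (hx : 0 ≤ x) :
    1 / ((i : ℝ) + 1) - 1 / (x + (i + 1)) ∈ Icc 0 (x / ((i : ℝ) + 1) ^ 2) := by
  have hi : (0 : ℝ) < i + 1 := by positivity
  have hxi : 0 < x + (i + 1) := by positivity
  rw [div_sub_div _ _ hi.ne' hxi.ne', one_mul, mul_one, add_sub_cancel_right]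
  exact ⟨by positivity, div_le_div_of_nonneg_left hx (by positivity) (by nlinarith)⟩

lemma summable_div_natCast_add_one_sq (c : ℝ) : Summable fun i : ℕ => c / ((i : ℝ) + 1) ^ 2 :=
  ((summable_one_div_add_pow zero_le_one le_rfl).mul_left c).congr fun i => by
    rw [add_comm, mul_one_div]

lemma summable_one_div_sub_one_div_add (hx : 0 ≤ x) :
    Summable fun i : ℕ => 1 / ((i : ℝ) + 1) - 1 / (x + (i + 1)) :=
  Summable.of_nonneg_of_le (fun i => (one_div_sub_one_div_add_mem_Icc i hx).1)
    (fun i => (one_div_sub_one_div_add_mem_Icc i hx).2) (summable_div_natCast_add_one_sq x)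

lemma hasDerivAt_digammaSeries (hx : 0 < x) : HasDerivAt digammaSeries (hurwitzSum 2 x) x := by
  have hpos (y : ℝ) (hy : y ∈ Ioi (x / 2)) (i : ℕ) : 0 < y + (i + 1) := by
    have : 0 < y := (half_pos hx).trans hy
    positivity
  have hterm (i : ℕ) (y : ℝ) (hy : y ∈ Ioi (x / 2)) : HasDerivAt
      (fun y => 1 / ((i : ℝ) + 1) - 1 / (y + (i + 1))) (1 / (y + (i + 1)) ^ 2) y := by
    simpa only [one_div, neg_neg] using
      ((hasDerivAt_inv (hpos y hy i).ne').comp_add_const y ((i : ℝ) + 1)).const_sub _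
  have hbound (i : ℕ) (y : ℝ) (hy : y ∈ Ioi (x / 2)) :
      ‖1 / (y + (i + 1)) ^ 2‖ ≤ 1 / (x / 2 + i) ^ 2 := by
    have := hpos y hy i
    have := half_pos hx
    rw [Real.norm_of_nonneg (by positivity)]
    gcongr
    · exact le_of_lt hy
    · linarith
  have hseries := hasDerivAt_tsum_of_isPreconnected
    (summable_one_div_add_pow (half_pos hx).le le_rfl) isOpen_Ioi isPreconnected_Ioi hterm hbound
    (half_lt_self hx) (summable_one_div_sub_one_div_add hx.le) (half_lt_self hx)
  have hinv : HasDerivAt (fun y => -eulerMascheroniConstant - 1 / y) (1 / x ^ 2) x := by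
    simpa only [one_div, zero_sub, neg_neg] using ((hasDerivAt_inv hx.ne').const_sub _)
  refine (hinv.add hseries).congr_deriv ?_
  rw [hurwitzSum, (summable_one_div_add_pow hx.le le_rfl).tsum_eq_zero_add]
  push_cast
  simp only [add_zero]

lemma hasDerivAt_logGammaSeq (n : ℕ) (hx : 0 < x) :
    HasDerivAt (fun y => BohrMollerup.logGammaSeq y n) (log n - harmonic n - 1 / x +
      ∑ i ∈ Finset.range n, (1 / ((i : ℝ) + 1) - 1 / (x + (i + 1)))) x := by
  have hlog : HasDerivAt (fun y => ∑ m ∈ Finset.range (n + 1), log (y + m))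
      (∑ m ∈ Finset.range (n + 1), 1 / (x + m)) x :=
    HasDerivAt.fun_sum fun m _ => by
      simpa only [one_div] using (hasDerivAt_log (by positivity)).comp_add_const x (m : ℝ)
  refine ((((hasDerivAt_id x).mul_const (log n)).add_const _).sub hlog).congr_deriv ?_
  rw [Finset.sum_range_succ', harmonic, Finset.sum_sub_distrib]
  push_cast
  ring_nf

lemma tendstoUniformlyOn_digammaSeries (b : ℝ) :
    TendstoUniformlyOn (fun (n : ℕ) y => log n - harmonic n - 1 / y +
      ∑ i ∈ Finset.range n, (1 / ((i : ℝ) + 1) - 1 / (y + (i + 1))))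
      digammaSeries atTop (Ioo 0 b) := by
  have hconst : Tendsto (fun n : ℕ => log n - harmonic n) atTop (𝓝 (-eulerMascheroniConstant)) := by
    simpa only [neg_sub] using tendsto_harmonic_sub_log.neg
  have hseries := tendstoUniformlyOn_tsum_nat (s := Ioo 0 b)
    (f := fun (i : ℕ) (y : ℝ) => 1 / ((i : ℝ) + 1) - 1 / (y + (i + 1)))
    (summable_div_natCast_add_one_sq b) fun i y hy => by
      obtain ⟨h0, hle⟩ := one_div_sub_one_div_add_mem_Icc i hy.1.le
      rw [Real.norm_of_nonneg h0]
      exact hle.trans (by gcongr; exact hy.2.le)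
  have hinv : TendstoUniformlyOn (fun (_ : ℕ) (y : ℝ) => 1 / y) (fun y => 1 / y) atTop (Ioo 0 b) :=
    fun u hu => Eventually.of_forall fun _ _ _ => refl_mem_uniformity hu
  exact (hconst.tendstoUniformlyOn_const _).sub hinv |>.add hseries

-- `BohrMollerup.logGammaSeq` tends to `log ∘ Gamma`, and its derivatives converge uniformly on
-- bounded intervals.
lemma hasDerivAt_log_Gamma (hx : 0 < x) :
    HasDerivAt (fun y => log (Gamma y)) (digammaSeries x) x :=
  hasDerivAt_of_tendstoLocallyUniformlyOn isOpen_Ioo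
    (tendstoUniformlyOn_digammaSeries (x + 1)).tendstoLocallyUniformlyOn
    (Eventually.of_forall fun n y hy => hasDerivAt_logGammaSeq n hy.1)
    (fun y hy => BohrMollerup.tendsto_log_gamma hy.1) ⟨hx, by linarith⟩

end Digamma

lemma Set.EqOn.iteratedDeriv_succ {f g g' : ℝ → ℝ} {U : Set ℝ} {k : ℕ} (hU : IsOpen U)
    (h : EqOn (iteratedDeriv k f) g U) (hg : ∀ x ∈ U, HasDerivAt g (g' x) x) :
    EqOn (iteratedDeriv (k + 1) f) g' U := fun x hx => by
  rw [_root_.iteratedDeriv_succ, (h.eventuallyEq_of_mem (hU.mem_nhds hx)).deriv_eq, (hg x hx).deriv]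

lemma HasDerivAt.comp_half_add {f : ℝ → ℝ} {f' a s : ℝ} (h : HasDerivAt f f' (s / 2 + a)) :
    HasDerivAt (fun t => f (t / 2 + a)) (f' / 2) s :=
  (h.comp s (((hasDerivAt_id' s).div_const 2).add_const a)).congr_deriv (mul_one_div _ _)

noncomputable def gueShift (m : ℕ) : ℝ := 1 / 2 + (m / 2 : ℕ)

lemma half_le_gueShift (m : ℕ) : 1 / 2 ≤ gueShift m :=
  le_add_of_nonneg_right (Nat.cast_nonneg _)

lemma le_two_mul_gueShift (m : ℕ) : (m : ℝ) ≤ 2 * gueShift m := by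
  have h : (m : ℝ) ≤ 2 * (m / 2 : ℕ) + 1 := by exact_mod_cast (by omega : m ≤ 2 * (m / 2) + 1)
  rw [gueShift]
  linarith

lemma half_add_gueShift_pos {s : ℝ} (hs : -1 < s) (m : ℕ) : 0 < s / 2 + gueShift m := by
  linarith [half_le_gueShift m]

section GUE

variable {n : ℕ} {s : ℝ}

lemma log_gueMgf (hs : -1 < s) :
    log (gueMgf n s) = n * log 2 / 2 * s +
      ∑ m ∈ Finset.Icc 1 n, (log (Gamma (s / 2 + gueShift m)) - log (Gamma (gueShift m))) := by
  have hΓs (m : ℕ) : 0 < Gamma (s / 2 + gueShift m) :=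
    Gamma_pos_of_pos (half_add_gueShift_pos hs m)
  have hΓ (m : ℕ) : 0 < Gamma (gueShift m) := Gamma_pos_of_pos (by linarith [half_le_gueShift m])
  have hprod : gueMgf n s = 2 ^ ((n : ℝ) * s / 2) *
      ∏ m ∈ Finset.Icc 1 n, Gamma (s / 2 + gueShift m) / Gamma (gueShift m) := by
    simp only [gueMgf, gueShift, add_assoc]
  have hratio (m : ℕ) := (div_pos (hΓs m) (hΓ m)).ne'
  rw [hprod, log_mul (by positivity) (Finset.prod_ne_zero_iff.2 fun m _ => hratio m),
    log_rpow two_pos, log_prod fun m _ => hratio m]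
  congr 1
  · ring
  · exact Finset.sum_congr rfl fun m _ => log_div (hΓs m).ne' (hΓ m).ne'

lemma hasDerivAt_log_gueMgf (hs : -1 < s) :
    HasDerivAt (fun s => log (gueMgf n s))
      (n * log 2 / 2 + ∑ m ∈ Finset.Icc 1 n, digammaSeries (s / 2 + gueShift m) / 2) s := by
  have hsum : HasDerivAt (fun t => ∑ m ∈ Finset.Icc 1 n,
      (log (Gamma (t / 2 + gueShift m)) - log (Gamma (gueShift m))))
      (∑ m ∈ Finset.Icc 1 n, digammaSeries (s / 2 + gueShift m) / 2) s :=
    HasDerivAt.fun_sum fun m _ =>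
      ((hasDerivAt_log_Gamma (half_add_gueShift_pos hs m)).comp_half_add).sub_const _
  have hlin := ((hasDerivAt_id' s).const_mul ((n : ℝ) * log 2 / 2)).congr_deriv (mul_one _)
  refine (hlin.add hsum).congr_of_eventuallyEq ?_
  filter_upwards [Ioi_mem_nhds hs] with t ht using log_gueMgf ht

lemma hasDerivAt_sum_digammaSeries (hs : -1 < s) :
    HasDerivAt
      (fun t => n * log 2 / 2 + ∑ m ∈ Finset.Icc 1 n, digammaSeries (t / 2 + gueShift m) / 2)
      ((∑ m ∈ Finset.Icc 1 n, hurwitzSum 2 (s / 2 + gueShift m)) / 4) s := by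
  have hsum := HasDerivAt.fun_sum (u := Finset.Icc 1 n) fun m _ =>
    ((hasDerivAt_digammaSeries (half_add_gueShift_pos hs m)).comp_half_add).div_const 2
  refine (hsum.const_add _).congr_deriv ?_
  rw [Finset.sum_div]
  exact Finset.sum_congr rfl fun m _ => by ring

lemma hasDerivAt_sum_hurwitzSum {k : ℕ} (hk : 2 ≤ k) (hs : -1 < s) :
    HasDerivAt (fun t => ∑ m ∈ Finset.Icc 1 n, hurwitzSum k (t / 2 + gueShift m))
      (-k / 2 * ∑ m ∈ Finset.Icc 1 n, hurwitzSum (k + 1) (s / 2 + gueShift m)) s := by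
  refine (HasDerivAt.fun_sum fun m _ =>
      (hasDerivAt_hurwitzSum hk (half_add_gueShift_pos hs m)).comp_half_add).congr_deriv ?_
  rw [Finset.mul_sum]
  exact Finset.sum_congr rfl fun m _ => by ring

end GUE

lemma iteratedDeriv_log_gueMgf (n j : ℕ) :
    EqOn (iteratedDeriv (j + 2) fun s => log (gueMgf n s))
      (fun s => (-1) ^ j * (j + 1)! / 2 ^ (j + 2) *
        ∑ m ∈ Finset.Icc 1 n, hurwitzSum (j + 2) (s / 2 + gueShift m)) (Ioi (-1)) := by
  induction j with
  | zero =>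
    have h0 : EqOn (iteratedDeriv 0 fun s => log (gueMgf n s)) (fun s => log (gueMgf n s))
        (Ioi (-1)) := fun s _ => congrFun iteratedDeriv_zero s
    have h1 := h0.iteratedDeriv_succ isOpen_Ioi fun s hs => hasDerivAt_log_gueMgf hs
    refine h1.iteratedDeriv_succ isOpen_Ioi fun s hs =>
      (hasDerivAt_sum_digammaSeries hs).congr_deriv ?_
    norm_num
    ring
  | succ j ih =>
    refine ih.iteratedDeriv_succ isOpen_Ioi fun s hs =>
      ((hasDerivAt_sum_hurwitzSum (by omega) hs).const_mul _).congr_deriv ?_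
    push_cast [Nat.factorial_succ, pow_succ]
    ring

lemma gueCumulant_eq (n j : ℕ) :
    gueCumulant (j + 2) n =
      (-1) ^ j * (j + 1)! / 2 ^ (j + 2) *
        ∑ m ∈ Finset.Icc 1 n, hurwitzSum (j + 2) (gueShift m) := by
  simpa only [gueCumulant, zero_div, zero_add] using
    iteratedDeriv_log_gueMgf n j (by norm_num : (0 : ℝ) ∈ Ioi (-1))

lemma abs_gueCumulant_eq (n j : ℕ) :
    |gueCumulant (j + 2) n| =
      (j + 1)! * ∑ m ∈ Finset.Icc 1 n, hurwitzSum (j + 2) (gueShift m) / 2 ^ (j + 2) := by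
  have hnonneg : 0 ≤ ∑ m ∈ Finset.Icc 1 n, hurwitzSum (j + 2) (gueShift m) :=
    Finset.sum_nonneg fun m _ => hurwitzSum_nonneg _ (by linarith [half_le_gueShift m])
  rw [gueCumulant_eq, abs_mul, abs_div, abs_mul, abs_neg_one_pow, one_mul, Nat.abs_cast, abs_pow,
    abs_two, abs_of_nonneg hnonneg, div_mul_comm, mul_comm, Finset.sum_div]

lemma sum_hurwitzSum_gueShift_div_le {k : ℕ} (hk : 3 ≤ k) (n : ℕ) :
    ∑ m ∈ Finset.Icc 1 n, hurwitzSum k (gueShift m) / 2 ^ k ≤ 4 := by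
  have hIcc : Finset.Icc 1 n = Finset.Ioo 0 (n + 1) := by ext; simp; omega
  calc ∑ m ∈ Finset.Icc 1 n, hurwitzSum k (gueShift m) / 2 ^ k
      ≤ ∑ m ∈ Finset.Icc 1 n, 2 / (2 * gueShift m) ^ 2 := by
        refine Finset.sum_le_sum fun m _ => ?_
        have := half_le_gueShift m
        exact (hurwitzSum_div_two_pow_le hk this).trans (hurwitzSum_three_le (by linarith))
    _ ≤ ∑ m ∈ Finset.Icc 1 n, 2 * ((m : ℝ) ^ 2)⁻¹ := by
        refine Finset.sum_le_sum fun m hm => ?_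
        have : (1 : ℝ) ≤ m := by exact_mod_cast (Finset.mem_Icc.1 hm).1
        rw [← div_eq_mul_inv]
        gcongr
        exact le_two_mul_gueShift m
    _ ≤ 4 := by
        rw [← Finset.mul_sum, hIcc]
        linarith [sum_Ioo_inv_sq_le (α := ℝ) 0 (n + 1)]

theorem gueCumulant_bound :
    ∃ C : ℝ, ∀ j : ℕ, 3 ≤ j → ∀ n : ℕ, 1 ≤ n →
      |gueCumulant j n| ≤ C * (Nat.factorial j : ℝ) := by
  refine ⟨4, fun j hj n _ => ?_⟩
  obtain ⟨j, rfl⟩ := Nat.exists_eq_add_of_le' hj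
  have hfac : ((j + 2)! : ℝ) ≤ (j + 3)! := by exact_mod_cast Nat.factorial_le (by omega)
  calc |gueCumulant (j + 1 + 2) n|
      = (j + 2)! * ∑ m ∈ Finset.Icc 1 n, hurwitzSum (j + 3) (gueShift m) / 2 ^ (j + 3) :=
        abs_gueCumulant_eq n (j + 1)
    _ ≤ (j + 2)! * 4 := by gcongr; exact sum_hurwitzSum_gueShift_div_le (by omega) n
    _ ≤ 4 * (j + 3)! := by linarith
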